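/- arXiv:1504.01899 — 3 statements merged into one kernel-verified Lean document; each statement's English description precedes it below -/
import Mathlib

section
/- Let Γ_{i,j} (for 1 ≤ i ≤ N and integer j ≥ 2−N) be defined by the initialization Γ_{i,2−j} = M_{i,j} for 1 ≤ j ≤ N, and by the recursion Γ_{i,j} = Σ_{k=1}^{N} (−1)^{k−1} ρ_k Γ_{i,j−k} for j ≥ 2. Then for every natural number n ≥ 1 and all indices 1 ≤ i, j ≤ N, the (i,j)-entry of M^n equals Γ_{i, n−(j−1)}. -/
/-!
Right multiplication by the normal-form matrix `M` puts into column `0` the combination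
`∑ₖ (-1)^k ρₖ Aᵢₖ` of the columns of `A` and shifts every other column one place to the
right. Hence, if the columns of a matrix are consecutive terms `Γᵢ(n), Γᵢ(n-1), …` of
sequences obeying the recursion, multiplying by `M` advances them by one step. The
initialization says exactly that `M` itself is such a window at `n = 1`, and induction on
`n` finishes the proof.
-/

open Matrix

variable {R : Type*} [CommRing R] {N : ℕ}

def normalFormMatrix (ρ : Fin N → R) : Matrix (Fin N) (Fin N) R :=
  of fun i j => if (j : ℕ) = 0 then (-1) ^ (i : ℕ) * ρ i else if (j : ℕ) = i + 1 then 1 else 0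

section normalFormMatrix

variable {m : Type*} (A : Matrix m (Fin N) R) (ρ : Fin N → R) (i : m)

theorem mul_normalFormMatrix_apply_of_val_eq_zero {j : Fin N} (hj : (j : ℕ) = 0) :
    (A * normalFormMatrix ρ) i j = ∑ k : Fin N, (-1) ^ (k : ℕ) * ρ k * A i k := by
  simp only [mul_apply, normalFormMatrix, of_apply, if_pos hj]
  exact Finset.sum_congr rfl fun k _ => mul_comm _ _

theorem mul_normalFormMatrix_apply_of_val_succ_eq {j k : Fin N} (hkj : (k : ℕ) + 1 = j) :
    (A * normalFormMatrix ρ) i j = A i k := by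
  have hj : (j : ℕ) ≠ 0 := by omega
  rw [mul_apply, Finset.sum_eq_single k]
  · simp [normalFormMatrix, hj, hkj]
  · intro l _ hlk
    have hlj : (j : ℕ) ≠ l + 1 := fun h => hlk (Fin.ext (by omega))
    simp [normalFormMatrix, hj, hlj]
  · simp

end normalFormMatrix

def windowMatrix {ι : Type*} (Γ : ι → ℤ → R) (N : ℕ) (n : ℤ) : Matrix ι (Fin N) R :=
  of fun i j => Γ i (n - j)

theorem windowMatrix_mul_normalFormMatrix {ι : Type*} (ρ : Fin N → R) (Γ : ι → ℤ → R)
    (hΓrec : ∀ i, ∀ j : ℤ, 2 ≤ j →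
      Γ i j = ∑ k : Fin N, (-1) ^ (k : ℕ) * ρ k * Γ i (j - ((k : ℤ) + 1)))
    {n : ℤ} (hn : 1 ≤ n) :
    windowMatrix Γ N n * normalFormMatrix ρ = windowMatrix Γ N (n + 1) := by
  ext i j
  by_cases hj : (j : ℕ) = 0
  · rw [mul_normalFormMatrix_apply_of_val_eq_zero _ _ _ hj]
    simp only [windowMatrix, of_apply, hj, Nat.cast_zero, sub_zero, hΓrec i (n + 1) (by omega)]
    exact Finset.sum_congr rfl fun k _ => by rw [show n + 1 - ((k : ℤ) + 1) = n - k by ring]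
  · have hjk : (j : ℕ) - 1 + 1 = j := by omega
    rw [mul_normalFormMatrix_apply_of_val_succ_eq _ _ _ (k := ⟨j - 1, by omega⟩) hjk]
    simp only [windowMatrix, of_apply]
    congr 1
    omega

theorem powers_of_normal_form_matrix_general
    (N : ℕ) (ρ : Fin N → ℝ)
    (M : Matrix (Fin N) (Fin N) ℝ)
    (hM : ∀ i j : Fin N, M i j =
      if (j : ℕ) = 0 then (-1 : ℝ) ^ (i : ℕ) * ρ i
      else if (j : ℕ) = (i : ℕ) + 1 then 1 else 0)
    (Γ : Fin N → ℤ → ℝ)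
    (hΓinit : ∀ i j : Fin N, Γ i (1 - (j : ℤ)) = M i j)
    (hΓrec : ∀ i : Fin N, ∀ j : ℤ, 2 ≤ j →
      Γ i j = ∑ k : Fin N, (-1 : ℝ) ^ (k : ℕ) * ρ k * Γ i (j - ((k : ℤ) + 1))) :
    ∀ n : ℕ, 1 ≤ n → ∀ i j : Fin N, (M ^ n) i j = Γ i ((n : ℤ) - (j : ℤ)) := by
  have hM_eq : M = normalFormMatrix ρ := ext hM
  have hM_window : M = windowMatrix Γ N 1 := ext fun i j => (hΓinit i j).symm
  suffices h : ∀ n : ℕ, 1 ≤ n → M ^ n = windowMatrix Γ N n from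
    fun n hn i j => congrFun₂ (h n hn) i j
  intro n hn
  induction n, hn using Nat.le_induction with
  | base => rw [pow_one, hM_window, Nat.cast_one]
  | succ n hn ih =>
    rw [pow_succ, ih, hM_eq, windowMatrix_mul_normalFormMatrix ρ Γ hΓrec (by omega), Nat.cast_succ]

/-- The normal-form matrix `M` of an `N`-dimensional piecewise linear continuous map:
`M k 0 = (-1)^k * ρ k` (0-based), superdiagonal entries equal to 1, all other entries 0.
Given sequences `Γ i` initialized from the rows of `M` (in reverse order) and propagated
by the recursion `Γ i j = ∑ k, (-1)^k * ρ k * Γ i (j - (k+1))` for `j ≥ 2`, the entries of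
`M^n` are `(M^n) i j = Γ i (n - j)` for all `n ≥ 1`. -/
theorem powers_of_normal_form_matrix
    (N : ℕ) (hN : 1 ≤ N) (ρ : Fin N → ℝ)
    (M : Matrix (Fin N) (Fin N) ℝ)
    (hM : ∀ i j : Fin N, M i j =
      if (j : ℕ) = 0 then (-1 : ℝ) ^ (i : ℕ) * ρ i
      else if (j : ℕ) = (i : ℕ) + 1 then 1 else 0)
    (Γ : Fin N → ℤ → ℝ)
    (hΓinit : ∀ i j : Fin N, Γ i (1 - (j : ℤ)) = M i j)
    (hΓrec : ∀ i : Fin N, ∀ j : ℤ, 2 ≤ j →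
      Γ i j = ∑ k : Fin N, (-1 : ℝ) ^ (k : ℕ) * ρ k * Γ i (j - ((k : ℤ) + 1))) :
    ∀ n : ℕ, 1 ≤ n → ∀ i j : Fin N, (M ^ n) i j = Γ i ((n : ℤ) - (j : ℤ)) :=
  powers_of_normal_form_matrix_general N ρ M hM Γ hΓinit hΓrec
end

section
/- For every natural number n ≥ 1, the (1,1)-entry of M^n equals Σ_{m=0}^{⌊n/2⌋} (−1)^m · C(n−m, m) · δ^m · τ^{n−2m}, where C denotes the binomial coefficient and ⌊·⌋ the floor function. -/
/-!
By Cayley–Hamilton, `M² = τ M - δ`, so every entry of `Mⁿ` satisfies the recurrence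
`u (n + 2) = τ u (n + 1) - δ u n`. Pascal's rule shows that the binomial sums satisfy the same
recurrence, and both sequences start with `1, τ`.
-/

open Finset

namespace Matrix

variable {R : Type*} [CommRing R]

theorem sq_eq_trace_smul_sub_det_smul (A : Matrix (Fin 2) (Fin 2) R) :
    A ^ 2 = A.trace • A - A.det • (1 : Matrix (Fin 2) (Fin 2) R) := by
  ext i j
  fin_cases i <;> fin_cases j <;>
    simp [sq, mul_apply, trace_fin_two, det_fin_two] <;> ring

theorem pow_add_two_eq_trace_smul_sub_det_smul (A : Matrix (Fin 2) (Fin 2) R) (n : ℕ) :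
    A ^ (n + 2) = A.trace • A ^ (n + 1) - A.det • A ^ n := by
  rw [pow_add, sq_eq_trace_smul_sub_det_smul, mul_sub, mul_smul_comm, mul_smul_comm, mul_one,
    ← pow_succ]

end Matrix

section BinomialSum

variable {R : Type*} [CommRing R] (τ δ : R)

def binomialTerm (n m : ℕ) : R :=
  (-1) ^ m * ((n - m).choose m : R) * δ ^ m * τ ^ (n - 2 * m)

def binomialSum (n : ℕ) : R :=
  ∑ m ∈ range (n / 2 + 1), binomialTerm τ δ n m

theorem binomialTerm_eq_zero {n m : ℕ} (h : n / 2 < m) : binomialTerm τ δ n m = 0 := by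
  rw [binomialTerm, Nat.choose_eq_zero_of_lt (by omega), Nat.cast_zero, mul_zero, zero_mul,
    zero_mul]

theorem sum_range_binomialTerm {n N : ℕ} (h : n / 2 < N) :
    ∑ m ∈ range N, binomialTerm τ δ n m = binomialSum τ δ n := by
  refine (sum_subset (range_subset_range.2 (by omega)) fun m _ hn => ?_).symm
  exact binomialTerm_eq_zero τ δ (by simpa using hn)

theorem binomialTerm_add_two_zero (n : ℕ) :
    binomialTerm τ δ (n + 2) 0 = τ * binomialTerm τ δ (n + 1) 0 := by
  simp [binomialTerm, pow_succ]
  ring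

theorem binomialTerm_add_two_succ (n m : ℕ) :
    binomialTerm τ δ (n + 2) (m + 1) =
      τ * binomialTerm τ δ (n + 1) (m + 1) - δ * binomialTerm τ δ n m := by
  have pascal : (n + 2 - (m + 1)).choose (m + 1) = (n - m).choose m + (n - m).choose (m + 1) := by
    rcases le_or_gt m n with hmn | hnm
    · rw [show n + 2 - (m + 1) = n - m + 1 by omega, Nat.choose_succ_succ']
    · rw [show n + 2 - (m + 1) = 0 by omega, show n - m = 0 by omega,
        Nat.choose_eq_zero_of_lt (by omega : 0 < m), Nat.choose_eq_zero_of_lt (by omega)]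
  have shift : ((n - m).choose (m + 1) : R) * τ ^ (n - 2 * m) =
      τ * ((n + 1 - (m + 1)).choose (m + 1) * τ ^ (n + 1 - 2 * (m + 1))) := by
    rw [show n + 1 - (m + 1) = n - m by omega]
    rcases le_or_gt (2 * m + 1) n with h | h
    · rw [show n - 2 * m = n + 1 - 2 * (m + 1) + 1 by omega, pow_succ]
      ring
    · simp [Nat.choose_eq_zero_of_lt (by omega : n - m < m + 1)]
  simp only [binomialTerm, pascal, Nat.cast_add, show n + 2 - 2 * (m + 1) = n - 2 * m by omega]
  linear_combination (-1 : R) ^ (m + 1) * δ ^ (m + 1) * shift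

theorem binomialSum_add_two (n : ℕ) :
    binomialSum τ δ (n + 2) = τ * binomialSum τ δ (n + 1) - δ * binomialSum τ δ n := by
  calc binomialSum τ δ (n + 2)
      = ∑ m ∈ range (n + 3), binomialTerm τ δ (n + 2) m :=
        (sum_range_binomialTerm τ δ (by omega)).symm
    _ = τ * ∑ m ∈ range (n + 3), binomialTerm τ δ (n + 1) m -
          δ * ∑ m ∈ range (n + 2), binomialTerm τ δ n m := by
        simp only [sum_range_succ' _ (n + 2), binomialTerm_add_two_succ, binomialTerm_add_two_zero,
          sum_sub_distrib, mul_add, mul_sum]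
        ring
    _ = τ * binomialSum τ δ (n + 1) - δ * binomialSum τ δ n := by
        rw [sum_range_binomialTerm τ δ (by omega), sum_range_binomialTerm τ δ (by omega)]

theorem eq_binomialSum_of_recurrence {u : ℕ → R} (h₀ : u 0 = 1) (h₁ : u 1 = τ)
    (h : ∀ n, u (n + 2) = τ * u (n + 1) - δ * u n) (n : ℕ) : u n = binomialSum τ δ n := by
  induction n using Nat.twoStepInduction with
  | zero => simp [h₀, binomialSum, binomialTerm]
  | one => simp [h₁, binomialSum, binomialTerm]
  | more n ih ih' => rw [h, ih, ih', binomialSum_add_two]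

end BinomialSum

/-- For the 2×2 normal-form matrix `M = !![τ,1; -δ,0]` and every `n ≥ 1`, the `(1,1)`
entry of `M^n` equals `∑_{m=0}^{⌊n/2⌋} (-1)^m C(n-m, m) δ^m τ^(n-2m)`. -/
theorem two_dim_matrix_power_top_left_entry
    (τ δ : ℝ)
    (M : Matrix (Fin 2) (Fin 2) ℝ)
    (hM : M = !![τ, 1; -δ, 0]) :
    ∀ n : ℕ, 1 ≤ n → (M ^ n) 0 0 = ∑ m ∈ Finset.range (n / 2 + 1),
      (-1 : ℝ) ^ m * (Nat.choose (n - m) m : ℝ) * δ ^ m * τ ^ (n - 2 * m) := by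
  intro n _
  have htrace : M.trace = τ := by simp [hM, Matrix.trace_fin_two]
  have hdet : M.det = δ := by simp [hM, Matrix.det_fin_two]
  refine eq_binomialSum_of_recurrence τ δ (u := fun n => (M ^ n) 0 0) (by simp) (by simp [hM])
    (fun n => ?_) n
  simp [M.pow_add_two_eq_trace_smul_sub_det_smul, htrace, hdet]
end

section
/- Assume 1 − τ + δ ≠ 0 and define f_n = (1 − a_n + δ a_{n−1}) / (1 − τ + δ) for integers n ≥ 0. Then for every integer n ≥ 2, the geometric sum φ_n = I + M + M^2 + ⋯ + M^{n−1} (i.e., Σ_{k=0}^{n−1} M^k) equals the 2×2 matrix with rows (f_n, f_{n−1}) and (−δ f_{n−1}, 1 − δ f_{n−2}). -/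
/-!
Since `φ (n + 1) = 1 + M * φ n`, the matrix form propagates as soon as `f` solves the
inhomogeneous recurrence `f m = τ f (m - 1) - δ f (m - 2) + 1` for `m ≥ 2`: multiplying by
`1 - τ + δ`, this is `δ` times the recurrence of `a` at `m - 1` minus the one at `m`.
Induction from `φ 2 = 1 + M`, where `f 0 = 0`, `f 1 = 1`, `f 2 = τ + 1`, finishes the proof.
-/

open Matrix

def geomSumMatrix (δ : ℝ) (f : ℤ → ℝ) (n : ℤ) : Matrix (Fin 2) (Fin 2) ℝ :=
  !![f n, f (n - 1); -δ * f (n - 1), 1 - δ * f (n - 2)]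

section
variable {τ δ : ℝ} {a f : ℤ → ℝ}

lemma rec_add_one_of_rec (hden : 1 - τ + δ ≠ 0)
    (harec : ∀ n : ℤ, 1 ≤ n → a n = τ * a (n - 1) - δ * a (n - 2))
    (hf : ∀ n : ℤ, 0 ≤ n → f n = (1 - a n + δ * a (n - 1)) / (1 - τ + δ))
    (m : ℤ) (hm : 2 ≤ m) : f m = τ * f (m - 1) - δ * f (m - 2) + 1 := by
  have hrec₀ := harec m (by omega)
  have hrec₁ := harec (m - 1) (by omega)
  rw [hf m (by omega), hf (m - 1) (by omega), hf (m - 2) (by omega)]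
  simp only [sub_sub] at hrec₁ ⊢
  norm_num at hrec₁ ⊢
  field_simp
  linear_combination δ * hrec₁ - hrec₀

lemma one_add_mul_geomSumMatrix
    (hrec : ∀ m : ℤ, 2 ≤ m → f m = τ * f (m - 1) - δ * f (m - 2) + 1) {n : ℤ} (hn : 2 ≤ n) :
    1 + !![τ, 1; -δ, 0] * geomSumMatrix δ f n = geomSumMatrix δ f (n + 1) := by
  have hshift : n + 1 - 2 = n - 1 := by ring
  have hrec₁ := hrec (n + 1) (by omega)
  rw [add_sub_cancel_right, hshift] at hrec₁
  rw [geomSumMatrix, geomSumMatrix, add_sub_cancel_right, hshift, hrec₁, hrec n hn, one_fin_two,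
    mul_fin_two]
  ext i j
  fin_cases i <;> fin_cases j <;> simp <;> ring

end

/-- For `M = !![τ,1; -δ,0]`, the sequence `a` with `a (-1) = 0`, `a 0 = 1`,
`a n = τ a (n-1) - δ a (n-2)` for `n ≥ 1`, and (assuming `1 - τ + δ ≠ 0`)
`f n = (1 - a n + δ a (n-1)) / (1 - τ + δ)` for `n ≥ 0`, the geometric sum
`φ_n = ∑_{k=0}^{n-1} M^k` equals `!![f n, f (n-1); -δ f (n-1), 1 - δ f (n-2)]`
for every `n ≥ 2`. -/
theorem two_dim_geometric_sum_form
    (τ δ : ℝ) (hden : 1 - τ + δ ≠ 0)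
    (M : Matrix (Fin 2) (Fin 2) ℝ)
    (hM : M = !![τ, 1; -δ, 0])
    (a : ℤ → ℝ)
    (ham : a (-1) = 0) (ha0 : a 0 = 1)
    (harec : ∀ n : ℤ, 1 ≤ n → a n = τ * a (n - 1) - δ * a (n - 2))
    (f : ℤ → ℝ)
    (hf : ∀ n : ℤ, 0 ≤ n → f n = (1 - a n + δ * a (n - 1)) / (1 - τ + δ)) :
    ∀ n : ℕ, 2 ≤ n →
      ∑ k ∈ Finset.range n, M ^ k =
        !![f n, f ((n : ℤ) - 1); -δ * f ((n : ℤ) - 1), 1 - δ * f ((n : ℤ) - 2)] := by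
  subst hM
  have hfrec := rec_add_one_of_rec hden harec hf
  have hf0 : f 0 = 0 := by simp [hf 0 le_rfl, ha0, ham]
  have ha1 : a 1 = τ := by simpa [ha0, ham] using harec 1 le_rfl
  have hf1 : f 1 = 1 := by simp [hf 1 zero_le_one, ha0, ha1, div_self hden]
  have hf2 : f 2 = τ + 1 := by simpa [hf0, hf1] using hfrec 2 le_rfl
  intro n hn
  change _ = geomSumMatrix δ f n
  induction n, hn using Nat.le_induction with
  | base =>
    rw [geom_sum_two, geomSumMatrix, one_fin_two]
    ext i j
    fin_cases i <;> fin_cases j <;> norm_num [hf0, hf1, hf2]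
  | succ n hn ih =>
    rw [geom_sum_succ, ih, add_comm, Nat.cast_succ,
      one_add_mul_geomSumMatrix hfrec (by exact_mod_cast hn)]
end
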